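/- The product on the nilCoxeter algebra is associative: defining σ ·_N τ = τ∘σ if #Inv(τ∘σ) = #Inv(σ) + #Inv(τ) and 0 otherwise, and extending bilinearly over F_2, gives an associative algebra structure on the free F_2-module with basis S_n. -/

import Mathlib

/-- The set of inversions of a permutation. -/
def InvSet {n : ℕ} (σ : Equiv.Perm (Fin n)) : Finset (Fin n × Fin n) :=
  Finset.univ.filter fun p => p.1 < p.2 ∧ σ p.2 < σ p.1

/-- The nilCoxeter product on the free `F₂`-module with basis `S_n`:
on basis elements, `σ ·_N τ = τ∘σ` if `#Inv(τ∘σ) = #Inv(σ) + #Inv(τ)` and `0`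
otherwise, extended bilinearly. -/
noncomputable def nilMul {n : ℕ} (x y : Equiv.Perm (Fin n) →₀ ZMod 2) :
    Equiv.Perm (Fin n) →₀ ZMod 2 :=
  x.sum fun σ a => y.sum fun τ b =>
    if (InvSet (τ * σ)).card = (InvSet σ).card + (InvSet τ).card then
      Finsupp.single (τ * σ) (a * b)
    else 0

lemma invSet_mul_le {n : ℕ} (σ τ : Equiv.Perm (Fin n)) :
    (InvSet (τ * σ)).card ≤ (InvSet σ).card + (InvSet τ).card := by
  classical
  set S := InvSet (τ * σ) with hS
  have hsplit := Finset.card_filter_add_card_filter_not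
    (s := S) (p := fun p => σ p.2 < σ p.1)
  have h1 : (S.filter (fun p => σ p.2 < σ p.1)).card ≤ (InvSet σ).card := by
    apply Finset.card_le_card
    intro p hp
    simp only [hS, InvSet, Finset.mem_filter, Finset.mem_univ, true_and] at hp ⊢
    exact ⟨hp.1.1, hp.2⟩
  have h2 : (S.filter (fun p => ¬ σ p.2 < σ p.1)).card ≤ (InvSet τ).card := by
    apply Finset.card_le_card_of_injOn (fun p => (σ p.1, σ p.2))
    · intro p hp
      replace hp : p ∈ S.filter (fun p => ¬ σ p.2 < σ p.1) := hp
      show (σ p.1, σ p.2) ∈ InvSet τ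
      simp only [hS, InvSet, Finset.mem_filter, Finset.mem_univ, true_and] at hp ⊢
      simp only [Equiv.Perm.mul_apply] at hp
      obtain ⟨⟨h12, hlt⟩, hnot⟩ := hp
      have hne : σ p.1 ≠ σ p.2 := fun h => absurd (σ.injective h) (ne_of_lt h12)
      exact ⟨lt_of_le_of_ne (not_lt.1 hnot) hne, hlt⟩
    · intro p _ q _ h
      have ha := σ.injective (congrArg Prod.fst h)
      have hb := σ.injective (congrArg Prod.snd h)
      exact Prod.ext ha hb
  omega

lemma chain_iff {n : ℕ} (σ τ ρ : Equiv.Perm (Fin n)) :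
    ((InvSet (τ*σ)).card = (InvSet σ).card + (InvSet τ).card ∧
     (InvSet (ρ*(τ*σ))).card = (InvSet (τ*σ)).card + (InvSet ρ).card) ↔
    ((InvSet (ρ*τ)).card = (InvSet τ).card + (InvSet ρ).card ∧
     (InvSet ((ρ*τ)*σ)).card = (InvSet σ).card + (InvSet (ρ*τ)).card) := by
  have e : ρ*(τ*σ) = (ρ*τ)*σ := (mul_assoc ρ τ σ).symm
  have h1 := invSet_mul_le σ τ
  have h2 := invSet_mul_le (τ*σ) ρ
  have h3 := invSet_mul_le τ ρ
  have h4 := invSet_mul_le σ (ρ*τ)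
  rw [e] at h2 ⊢
  omega

lemma nilMul_single {n : ℕ} (σ τ : Equiv.Perm (Fin n)) (a b : ZMod 2) :
    nilMul (Finsupp.single σ a) (Finsupp.single τ b) =
      if (InvSet (τ*σ)).card = (InvSet σ).card + (InvSet τ).card then
        Finsupp.single (τ*σ) (a*b) else 0 := by
  classical
  unfold nilMul
  rw [Finsupp.sum_single_index, Finsupp.sum_single_index]
  · split_ifs <;> simp
  · simp [Finsupp.sum_single_index]

lemma zero_nilMul {n : ℕ} (y : Equiv.Perm (Fin n) →₀ ZMod 2) :
    nilMul 0 y = 0 := by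
  simp [nilMul]

lemma nilMul_zero {n : ℕ} (x : Equiv.Perm (Fin n) →₀ ZMod 2) :
    nilMul x 0 = 0 := by
  simp [nilMul]

lemma add_nilMul {n : ℕ} (x x' y : Equiv.Perm (Fin n) →₀ ZMod 2) :
    nilMul (x + x') y = nilMul x y + nilMul x' y := by
  classical
  unfold nilMul
  rw [Finsupp.sum_add_index]
  · intro σ _
    simp
  · intro σ _ a a'
    rw [← Finsupp.sum_add]
    congr 1
    ext τ b
    split_ifs with h
    · rw [add_mul, Finsupp.single_add]
    · simp

lemma nilMul_add {n : ℕ} (x y y' : Equiv.Perm (Fin n) →₀ ZMod 2) :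
    nilMul x (y + y') = nilMul x y + nilMul x y' := by
  classical
  unfold nilMul
  rw [← Finsupp.sum_add]
  congr 1
  ext σ a
  rw [Finsupp.sum_add_index]
  · intro τ _
    simp
  · intro τ _ b b'
    split_ifs with h
    · rw [mul_add, Finsupp.single_add]
    · simp

lemma nilMul_single_assoc {n : ℕ} (σ τ ρ : Equiv.Perm (Fin n)) (a b c : ZMod 2) :
    nilMul (nilMul (Finsupp.single σ a) (Finsupp.single τ b)) (Finsupp.single ρ c)
      = nilMul (Finsupp.single σ a) (nilMul (Finsupp.single τ b) (Finsupp.single ρ c)) := by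
  classical
  rw [nilMul_single, nilMul_single]
  have key := chain_iff σ τ ρ
  by_cases h1 : (InvSet (τ*σ)).card = (InvSet σ).card + (InvSet τ).card
  · rw [if_pos h1]
    rw [nilMul_single]
    by_cases h3 : (InvSet (ρ*τ)).card = (InvSet τ).card + (InvSet ρ).card
    · rw [if_pos h3, nilMul_single]
      by_cases h2 : (InvSet (ρ*(τ*σ))).card = (InvSet (τ*σ)).card + (InvSet ρ).card
      · have h4 := (key.mp ⟨h1, h2⟩).2
        rw [if_pos h2, if_pos h4, mul_assoc ρ τ σ, mul_assoc a b c]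
      · have h4 : ¬ (InvSet ((ρ*τ)*σ)).card = (InvSet σ).card + (InvSet (ρ*τ)).card := by
          intro h4
          exact h2 (key.mpr ⟨h3, h4⟩).2
        rw [if_neg h2, if_neg h4]
    · rw [if_neg h3, nilMul_zero]
      have h2 : ¬ (InvSet (ρ*(τ*σ))).card = (InvSet (τ*σ)).card + (InvSet ρ).card := by
        intro h2
        exact h3 (key.mp ⟨h1, h2⟩).1
      rw [if_neg h2]
  · rw [if_neg h1, zero_nilMul]
    by_cases h3 : (InvSet (ρ*τ)).card = (InvSet τ).card + (InvSet ρ).card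
    · rw [if_pos h3, nilMul_single]
      have h4 : ¬ (InvSet ((ρ*τ)*σ)).card = (InvSet σ).card + (InvSet (ρ*τ)).card := by
        intro h4
        exact h1 (key.mpr ⟨h3, h4⟩).1
      rw [if_neg h4]
    · rw [if_neg h3, nilMul_zero]

/-- The nilCoxeter product is associative. -/
theorem nilMul_assoc (n : ℕ) (x y z : Equiv.Perm (Fin n) →₀ ZMod 2) :
    nilMul (nilMul x y) z = nilMul x (nilMul y z) := by
  induction x using Finsupp.induction_linear with
  | zero => simp [zero_nilMul]
  | add x x' hx hx' => rw [add_nilMul, add_nilMul, add_nilMul, hx, hx']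
  | single σ a =>
    induction y using Finsupp.induction_linear with
    | zero => simp [zero_nilMul, nilMul_zero]
    | add y y' hy hy' =>
      rw [nilMul_add, add_nilMul, hy, hy', add_nilMul, nilMul_add]
    | single τ b =>
      induction z using Finsupp.induction_linear with
      | zero => simp [nilMul_zero]
      | add z z' hz hz' => rw [nilMul_add, nilMul_add, nilMul_add, hz, hz']
      | single ρ c => exact nilMul_single_assoc σ τ ρ a b c
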